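/- arXiv:2206.10723 — 3 statements merged into one kernel-verified Lean document; each statement's English description precedes it below -/
import Mathlib

section
/- Let γ < 1 and let h : [0,∞) → ℝ be continuous with h(x) ∼ x^{−1} (log x)^{−γ} as x → ∞. Then, as R → ∞, (1/(2R)) ∫₀^R ∫₀^R h(|x−y|) dx dy ∼ ∫₀^R h(x) dx, and ∫₀^R h(x) dx ∼ (1/(1−γ)) R h(R) (log R) ∼ (1/(1−γ)) (log R)^{1−γ}. -/
/-!
Write `g x = x⁻¹ (log x)^(-γ)`; its primitive `G R = (log R)^(1-γ) / (1-γ)` tends to infinity.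
Integrating an asymptotic equivalence against a nonnegative function with divergent integral
preserves it, so `∫₀^R h ∼ G R`, and `R h(R) log R ∼ R g(R) log R = (1-γ) G R`.
For the double integral, `u ↦ h |u|` is even, and together with Cauchy's formula for repeated
integration this gives `(1/(2R)) ∫₀^R ∫₀^R h |x - y| = ∫₀^R h - R⁻¹ ∫₀^R x h(x)`.
Since `x h(x) ∼ (log x)^(-γ) = o((log x)^(1-γ))` and `(log x)^(1-γ)` is increasing, the last
term is `o(G R)`.
-/

open Filter Asymptotics MeasureTheory Set

theorem isLittleO_rpow_rpow_atTop {a b : ℝ} (hab : a < b) :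
    (fun x : ℝ => x ^ a) =o[atTop] fun x => x ^ b := by
  refine (isLittleO_iff_tendsto' ?_).2 ?_
  · filter_upwards [eventually_gt_atTop 0] with x hx h0
    exact absurd h0 (Real.rpow_pos_of_pos hx b).ne'
  · refine (tendsto_rpow_neg_atTop (sub_pos.2 hab)).congr' ?_
    filter_upwards [eventually_gt_atTop 0] with x hx
    change x ^ (-(b - a)) = x ^ a / x ^ b
    rw [← Real.rpow_sub hx, neg_sub]

theorem Asymptotics.IsLittleO.intervalIntegral {f g : ℝ → ℝ} {a : ℝ} (hfg : f =o[atTop] g)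
    (hf : ∀ b ≥ a, IntervalIntegrable f volume a b)
    (hg : ∀ b ≥ a, IntervalIntegrable g volume a b) (hg_nonneg : ∀ᶠ x in atTop, 0 ≤ g x)
    (hg_top : Tendsto (fun b => ∫ x in a..b, g x) atTop atTop) :
    (fun b => ∫ x in a..b, f x) =o[atTop] fun b => ∫ x in a..b, g x := by
  refine isLittleO_iff.2 fun ε hε => ?_
  obtain ⟨X, hX⟩ := ((hfg.def (half_pos hε)).and
    (hg_nonneg.and (eventually_ge_atTop a))).exists_forall_of_atTop
  have haX : a ≤ X := (hX X le_rfl).2.2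
  set C := ‖∫ x in a..X, f x‖ + ε / 2 * ‖∫ x in a..X, g x‖ with hC_def
  filter_upwards [eventually_ge_atTop X, hg_top.eventually_ge_atTop (2 * C / ε)] with b hXb hb
  have hab : a ≤ b := haX.trans hXb
  have htail : ‖∫ x in X..b, f x‖ ≤ ε / 2 * ∫ x in X..b, g x := by
    rw [← intervalIntegral.integral_const_mul]
    refine intervalIntegral.norm_integral_le_of_norm_le hXb (ae_of_all _ fun x hx => ?_)
      (((hg X haX).symm.trans (hg b hab)).const_mul _)
    obtain ⟨hfx, hgx, -⟩ := hX x hx.1.le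
    rwa [Real.norm_of_nonneg hgx] at hfx
  have hf_split := intervalIntegral.integral_add_adjacent_intervals (hf X haX)
    ((hf X haX).symm.trans (hf b hab))
  have hC : C ≤ ε / 2 * ∫ x in a..b, g x := by
    rw [div_le_iff₀' hε] at hb
    linarith
  have hhead : ε / 2 * -(∫ x in a..X, g x) ≤ ε / 2 * ‖∫ x in a..X, g x‖ :=
    mul_le_mul_of_nonneg_left ((neg_le_abs _).trans_eq (Real.norm_eq_abs _).symm) (half_pos hε).le
  rw [← intervalIntegral.integral_interval_sub_left (hg b hab) (hg X haX)] at htail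
  rw [Real.norm_of_nonneg (le_trans (by positivity) hb), ← hf_split]
  linarith [norm_add_le (∫ x in a..X, f x) (∫ x in X..b, f x)]

theorem Asymptotics.IsEquivalent.intervalIntegral {f g : ℝ → ℝ} {a : ℝ} (hfg : f ~[atTop] g)
    (hf : ∀ b ≥ a, IntervalIntegrable f volume a b)
    (hg : ∀ b ≥ a, IntervalIntegrable g volume a b) (hg_nonneg : ∀ᶠ x in atTop, 0 ≤ g x)
    (hg_top : Tendsto (fun b => ∫ x in a..b, g x) atTop atTop) :
    (fun b => ∫ x in a..b, f x) ~[atTop] fun b => ∫ x in a..b, g x := by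
  refine (hfg.isLittleO.intervalIntegral (fun b hb => (hf b hb).sub (hg b hb)) hg hg_nonneg
    hg_top).congr' ?_ EventuallyEq.rfl
  filter_upwards [eventually_ge_atTop a] with b hb
  exact intervalIntegral.integral_sub (hf b hb) (hg b hb)

theorem Asymptotics.IsLittleO.inv_mul_intervalIntegral {f L : ℝ → ℝ} {a x₀ : ℝ}
    (hfL : f =o[atTop] L) (hf : ∀ b ≥ a, IntervalIntegrable f volume a b)
    (hL_mono : MonotoneOn L (Ici x₀)) (hL_top : Tendsto L atTop atTop) :
    (fun R => R⁻¹ * ∫ x in a..R, f x) =o[atTop] L := by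
  refine isLittleO_iff.2 fun ε hε => ?_
  obtain ⟨X, hX⟩ := ((hfL.def (half_pos hε)).and ((hL_top.eventually_ge_atTop 0).and
    (eventually_ge_atTop (max x₀ (max a 0))))).exists_forall_of_atTop
  obtain ⟨hx₀X, haX, h0X⟩ : x₀ ≤ X ∧ a ≤ X ∧ 0 ≤ X := by
    simpa only [max_le_iff] using (hX X le_rfl).2.2
  set C := ‖∫ x in a..X, f x‖
  filter_upwards [eventually_ge_atTop (max X 1), hL_top.eventually_ge_atTop (2 * C / ε)]
    with R hR hLR
  obtain ⟨hXR, h1R⟩ := max_le_iff.1 hR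
  have hR0 : 0 < R := by linarith
  have hLR0 : 0 ≤ L R := (hX R hXR).2.1
  have htail : ‖∫ x in X..R, f x‖ ≤ ε / 2 * L R * R := by
    refine (intervalIntegral.norm_integral_le_of_norm_le_const (C := ε / 2 * L R)
      fun x hx => ?_).trans ?_
    · rw [uIoc_of_le hXR] at hx
      obtain ⟨hfx, hLx, -⟩ := hX x hx.1.le
      rw [Real.norm_of_nonneg hLx] at hfx
      exact hfx.trans (mul_le_mul_of_nonneg_left
        (hL_mono (hx₀X.trans hx.1.le) (hx₀X.trans hXR) hx.2) (by positivity))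
    · rw [abs_of_nonneg (sub_nonneg.2 hXR)]
      exact mul_le_mul_of_nonneg_left (by linarith) (by positivity)
  have hsplit := intervalIntegral.integral_add_adjacent_intervals (hf X haX)
    ((hf X haX).symm.trans (hf R (haX.trans hXR)))
  have hC : C ≤ ε / 2 * L R := by
    rw [div_le_iff₀' hε] at hLR
    linarith
  rw [Real.norm_of_nonneg hLR0, norm_mul, norm_inv, Real.norm_of_nonneg hR0.le, ← hsplit,
    inv_mul_le_iff₀ hR0]
  calc ‖(∫ x in a..X, f x) + ∫ x in X..R, f x‖ ≤ C + ε / 2 * L R * R :=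
        (norm_add_le _ _).trans (by linarith)
    _ ≤ R * (ε * L R) := by
        nlinarith [mul_le_mul_of_nonneg_left h1R (by positivity : 0 ≤ ε / 2 * L R)]

theorem Continuous.integral_primitive_eq_integral_sub_mul {H : ℝ → ℝ} (hH : Continuous H)
    (R : ℝ) :
    ∫ x in (0 : ℝ)..R, ∫ t in (0 : ℝ)..x, H t = ∫ x in (0 : ℝ)..R, (R - x) * H x := by
  have := intervalIntegral.integral_mul_deriv_eq_deriv_mul (a := 0) (b := R)
    (u := fun x => R - x) (u' := fun _ => -1) (v' := H)
    (fun x _ => (hasDerivAt_id x).const_sub R |>.congr_deriv (by simp))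
    (fun x _ => (hH.integral_hasStrictDerivAt 0 x).hasDerivAt)
    intervalIntegrable_const (hH.intervalIntegrable _ _)
  simpa using this.symm

theorem Continuous.integral_integral_comp_sub_of_even {H : ℝ → ℝ} (hH : Continuous H)
    (heven : ∀ x, H (-x) = H x) (R : ℝ) :
    ∫ x in (0 : ℝ)..R, ∫ y in (0 : ℝ)..R, H (x - y)
      = 2 * ∫ x in (0 : ℝ)..R, (R - x) * H x := by
  have hprim : Continuous fun t => ∫ u in (0 : ℝ)..t, H u :=
    intervalIntegral.continuous_primitive hH.intervalIntegrable 0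
  have hodd : ∀ t, ∫ u in (0 : ℝ)..-t, H u = -∫ u in (0 : ℝ)..t, H u := by
    intro t
    have := intervalIntegral.integral_comp_neg (a := 0) (b := t) H
    simp only [heven, neg_zero] at this
    rw [this, intervalIntegral.integral_symm]
  have hinner : ∀ x, ∫ y in (0 : ℝ)..R, H (x - y)
      = (∫ u in (0 : ℝ)..x, H u) + ∫ u in (0 : ℝ)..R - x, H u := by
    intro x
    rw [intervalIntegral.integral_comp_sub_left, sub_zero,
      ← intervalIntegral.integral_interval_sub_left (hH.intervalIntegrable 0 x)
        (hH.intervalIntegrable 0 (x - R)), ← neg_sub R x, hodd, sub_neg_eq_add]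
  have hreflect : ∫ x in (0 : ℝ)..R, ∫ u in (0 : ℝ)..R - x, H u
      = ∫ x in (0 : ℝ)..R, ∫ u in (0 : ℝ)..x, H u := by
    simp [intervalIntegral.integral_comp_sub_left (fun t => ∫ u in (0 : ℝ)..t, H u)]
  have hprim_reflect : Continuous fun x => ∫ u in (0 : ℝ)..R - x, H u :=
    hprim.comp (continuous_sub_left R)
  simp_rw [hinner]
  rw [intervalIntegral.integral_add (hprim.intervalIntegrable _ _)
    (hprim_reflect.intervalIntegrable _ _), hreflect,
    hH.integral_primitive_eq_integral_sub_mul]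
  ring

theorem mean_integral_integral_abs_sub {h : ℝ → ℝ} (hcont : ContinuousOn h (Ici 0)) {R : ℝ}
    (hR : 0 < R) :
    1 / (2 * R) * ∫ x in (0 : ℝ)..R, ∫ y in (0 : ℝ)..R, h |x - y|
      = (∫ x in (0 : ℝ)..R, h x) - R⁻¹ * ∫ x in (0 : ℝ)..R, x * h x := by
  have hH : Continuous fun u => h |u| := hcont.comp_continuous continuous_abs abs_nonneg
  have hcont' : ContinuousOn h (Icc 0 R) := hcont.mono fun _ hx => hx.1
  have hweight : ∫ x in (0 : ℝ)..R, (R - x) * h |x|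
      = R * (∫ x in (0 : ℝ)..R, h x) - ∫ x in (0 : ℝ)..R, x * h x := by
    have hxh : ContinuousOn (fun x => x * h x) (Icc 0 R) := continuousOn_id.mul hcont'
    rw [← intervalIntegral.integral_const_mul, ← intervalIntegral.integral_sub
      ((hcont'.intervalIntegrable_of_Icc hR.le).const_mul R) (hxh.intervalIntegrable_of_Icc hR.le)]
    refine intervalIntegral.integral_congr fun x hx => ?_
    rw [uIcc_of_le hR.le] at hx
    simp only [abs_of_nonneg hx.1]
    ring
  rw [hH.integral_integral_comp_sub_of_even (fun x => congrArg h (abs_neg x)) R, hweight]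
  field_simp

theorem tendsto_log_rpow_atTop {s : ℝ} (hs : 0 < s) :
    Tendsto (fun x => Real.log x ^ s) atTop atTop :=
  (tendsto_rpow_atTop hs).comp Real.tendsto_log_atTop

section LogPower

variable {γ : ℝ}

theorem hasDerivAt_log_rpow_div (hγ : γ ≠ 1) {x : ℝ} (hx : 1 < x) :
    HasDerivAt (fun x => 1 / (1 - γ) * Real.log x ^ (1 - γ)) (x⁻¹ * Real.log x ^ (-γ)) x := by
  have hlog : 0 < Real.log x := Real.log_pos hx
  have := ((Real.hasDerivAt_rpow_const (p := 1 - γ) (Or.inl hlog.ne')).comp x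
    (Real.hasDerivAt_log (by linarith))).const_mul (1 / (1 - γ))
  refine this.congr_deriv ?_
  rw [sub_sub_cancel_left]
  field_simp [sub_ne_zero.2 hγ.symm]

theorem intervalIntegrable_inv_mul_log_rpow {a b : ℝ} (ha : 1 < a) (hb : 1 < b) :
    IntervalIntegrable (fun x => x⁻¹ * Real.log x ^ (-γ)) volume a b := by
  apply ContinuousOn.intervalIntegrable
  intro x hx
  apply ContinuousAt.continuousWithinAt
  have hx : 1 < x := (lt_min ha hb).trans_le hx.1
  exact (continuousAt_inv₀ (by positivity)).mul
    ((Real.continuousAt_log (by positivity)).rpow_const (Or.inl (Real.log_pos hx).ne'))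

theorem integral_inv_mul_log_rpow (hγ : γ ≠ 1) {a b : ℝ} (ha : 1 < a) (hb : 1 < b) :
    ∫ x in a..b, x⁻¹ * Real.log x ^ (-γ)
      = 1 / (1 - γ) * Real.log b ^ (1 - γ) - 1 / (1 - γ) * Real.log a ^ (1 - γ) :=
  intervalIntegral.integral_eq_sub_of_hasDerivAt
    (fun _ hx => hasDerivAt_log_rpow_div hγ ((lt_min ha hb).trans_le hx.1))
    (intervalIntegrable_inv_mul_log_rpow ha hb)

variable {h : ℝ → ℝ}

theorem isEquivalent_integral_of_isEquivalent_inv_mul_log_rpow (hγ : γ < 1)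
    (hcont : ContinuousOn h (Ici 0)) (hhg : h ~[atTop] fun x => x⁻¹ * Real.log x ^ (-γ)) :
    (fun R => ∫ x in (0 : ℝ)..R, h x) ~[atTop]
      fun R => 1 / (1 - γ) * Real.log R ^ (1 - γ) := by
  set G : ℝ → ℝ := fun R => 1 / (1 - γ) * Real.log R ^ (1 - γ)
  -- Compare on `[2, b]`: the comparison function has the singularity `x⁻¹` at 0, and below 1
  -- its `rpow` has a negative base.
  have hG_top : Tendsto G atTop atTop :=
    (tendsto_log_rpow_atTop (sub_pos.2 hγ)).const_mul_atTop (one_div_pos.2 (sub_pos.2 hγ))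
  have hG_norm : Tendsto (norm ∘ G) atTop atTop := tendsto_norm_atTop_atTop.comp hG_top
  have hh_int : ∀ b ≥ (2 : ℝ), IntervalIntegrable h volume 2 b := fun b hb =>
    (hcont.mono fun _ hx => zero_le_two.trans hx.1).intervalIntegrable_of_Icc hb
  have hg_int : ∀ b ≥ (2 : ℝ),
      IntervalIntegrable (fun x => x⁻¹ * Real.log x ^ (-γ)) volume 2 b := fun b hb =>
    intervalIntegrable_inv_mul_log_rpow one_lt_two (one_lt_two.trans_le hb)
  have hg_nonneg : ∀ᶠ x in atTop, 0 ≤ x⁻¹ * Real.log x ^ (-γ) := by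
    filter_upwards [eventually_gt_atTop 1] with x hx
    have := Real.log_pos hx
    positivity
  have hgG : (fun b => ∫ x in (2 : ℝ)..b, x⁻¹ * Real.log x ^ (-γ)) =ᶠ[atTop]
      fun b => G b + -G 2 := by
    filter_upwards [eventually_gt_atTop 1] with b hb
    rw [integral_inv_mul_log_rpow hγ.ne one_lt_two hb, ← sub_eq_add_neg]
  have htail : (fun b => ∫ x in (2 : ℝ)..b, h x) ~[atTop] G :=
    (hhg.intervalIntegral hh_int hg_int hg_nonneg
      ((tendsto_atTop_add_const_right _ _ hG_top).congr' hgG.symm)).trans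
      (hgG.trans_isEquivalent (IsEquivalent.refl.add_const_of_norm_tendsto_atTop hG_norm))
  refine IsEquivalent.congr_left
    (htail.const_add_of_norm_tendsto_atTop hG_norm (c := ∫ x in (0 : ℝ)..2, h x)) ?_
  filter_upwards [eventually_ge_atTop 2] with b hb
  exact intervalIntegral.integral_add_adjacent_intervals
    ((hcont.mono fun _ hx => hx.1).intervalIntegrable_of_Icc zero_le_two) (hh_int b hb)

theorem isEquivalent_mul_mul_log (hhg : h ~[atTop] fun x => x⁻¹ * Real.log x ^ (-γ)) :
    (fun R => 1 / (1 - γ) * R * h R * Real.log R) ~[atTop]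
      fun R => 1 / (1 - γ) * Real.log R ^ (1 - γ) := by
  refine ((IsEquivalent.refl (u := fun R => 1 / (1 - γ) * R)).mul hhg).mul
    (IsEquivalent.refl (u := Real.log)) |>.trans_eventuallyEq ?_
  filter_upwards [eventually_gt_atTop 1] with R hR
  have hlog := Real.log_pos hR
  simp only [Pi.mul_apply]
  rw [show 1 - γ = -γ + 1 by ring, Real.rpow_add_one hlog.ne']
  field_simp

theorem isLittleO_inv_mul_integral_mul_self (hγ : γ < 1) (hcont : ContinuousOn h (Ici 0))
    (hhg : h ~[atTop] fun x => x⁻¹ * Real.log x ^ (-γ)) :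
    (fun R => R⁻¹ * ∫ x in (0 : ℝ)..R, x * h x) =o[atTop]
      fun R => Real.log R ^ (1 - γ) := by
  refine IsLittleO.inv_mul_intervalIntegral (x₀ := 1) ?_
    (fun b hb => ((continuousOn_id.mul (hcont.mono fun _ hx => hx.1))).intervalIntegrable_of_Icc hb)
    (fun x hx y _ hxy => ?_) (tendsto_log_rpow_atTop (sub_pos.2 hγ))
  · have hxg : (fun x => x * (x⁻¹ * Real.log x ^ (-γ))) =ᶠ[atTop]
        fun x => Real.log x ^ (-γ) := by
      filter_upwards [eventually_gt_atTop 0] with x hx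
      exact mul_inv_cancel_left₀ hx.ne' _
    exact ((IsEquivalent.refl (u := id)).mul hhg).trans_eventuallyEq hxg |>.trans_isLittleO
      ((isLittleO_rpow_rpow_atTop (by linarith)).comp_tendsto Real.tendsto_log_atTop)
  · exact Real.rpow_le_rpow (Real.log_nonneg hx)
      (Real.log_le_log (zero_lt_one.trans_le hx) hxy) (sub_nonneg.2 hγ.le)

theorem isEquivalent_mean_integral_integral_abs_sub (hγ : γ < 1) (hcont : ContinuousOn h (Ici 0))
    (hhg : h ~[atTop] fun x => x⁻¹ * Real.log x ^ (-γ)) :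
    (fun R => 1 / (2 * R) * ∫ x in (0 : ℝ)..R, ∫ y in (0 : ℝ)..R, h |x - y|) ~[atTop]
      fun R => ∫ x in (0 : ℝ)..R, h x := by
  have hsmall : (fun R => R⁻¹ * ∫ x in (0 : ℝ)..R, x * h x) =o[atTop]
      fun R => ∫ x in (0 : ℝ)..R, h x :=
    ((isLittleO_inv_mul_integral_mul_self hγ hcont hhg).trans_isBigO
      (isBigO_self_const_mul (one_div_ne_zero (sub_ne_zero.2 hγ.ne')) _ _)).trans_isEquivalent
      (isEquivalent_integral_of_isEquivalent_inv_mul_log_rpow hγ hcont hhg).symm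
  refine (IsEquivalent.refl.sub_isLittleO hsmall).congr_left ?_
  filter_upwards [eventually_gt_atTop 0] with R hR
  exact (mean_integral_integral_abs_sub hcont hR).symm

end LogPower

/-- if `γ < 1` and `h : [0,∞) → ℝ` is continuous with
`h(x) ∼ x⁻¹ (log x)^(-γ)` as `x → ∞`, then
`(1/(2R)) ∫₀^R ∫₀^R h(|x-y|) dx dy ∼ ∫₀^R h(x) dx`, and
`∫₀^R h(x) dx ∼ (1/(1-γ)) R h(R) (log R) ∼ (1/(1-γ)) (log R)^(1-γ)` as `R → ∞`. -/
theorem statement2 (γ : ℝ) (hγ : γ < 1) (h : ℝ → ℝ)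
    (hcont : ContinuousOn h (Set.Ici 0))
    (hasymp : Tendsto (fun x => h x / (x⁻¹ * Real.log x ^ (-γ))) atTop (nhds 1)) :
    Tendsto (fun R =>
        ((1 / (2 * R)) * ∫ x in (0:ℝ)..R, ∫ y in (0:ℝ)..R, h |x - y|) /
          (∫ x in (0:ℝ)..R, h x)) atTop (nhds 1)
    ∧ Tendsto (fun R =>
        (∫ x in (0:ℝ)..R, h x) / ((1 / (1 - γ)) * R * h R * Real.log R)) atTop (nhds 1)
    ∧ Tendsto (fun R =>
        (∫ x in (0:ℝ)..R, h x) / ((1 / (1 - γ)) * Real.log R ^ (1 - γ))) atTop (nhds 1) := by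
  have hhg : h ~[atTop] fun x => x⁻¹ * Real.log x ^ (-γ) := isEquivalent_of_tendsto_one hasymp
  have hG_pos : ∀ᶠ R in atTop, 0 < 1 / (1 - γ) * Real.log R ^ (1 - γ) := by
    filter_upwards [eventually_gt_atTop 1] with R hR
    exact mul_pos (one_div_pos.2 (sub_pos.2 hγ)) (Real.rpow_pos_of_pos (Real.log_pos hR) _)
  have hφ := isEquivalent_integral_of_isEquivalent_inv_mul_log_rpow hγ hcont hhg
  have hmid := isEquivalent_mul_mul_log hhg
  refine ⟨?_, ?_, (isEquivalent_iff_tendsto_one (hG_pos.mono fun _ => ne_of_gt)).1 hφ⟩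
  · exact (isEquivalent_iff_tendsto_one ((hφ.eventually_pos hG_pos).mono fun _ => ne_of_gt)).1
      (isEquivalent_mean_integral_integral_abs_sub hγ hcont hhg)
  · exact (isEquivalent_iff_tendsto_one ((hmid.eventually_pos hG_pos).mono fun _ => ne_of_gt)).1
      (hφ.trans hmid.symm)
end

section
/- For every dimension d ≥ 1 there exists a constant c_d ≥ 1, depending only on d, such that for every R₁ ≥ 1 and every R₂ ≥ 2R₁ there exist points z¹₁,…,z¹_n and z²₁,…,z²_n in ℝ^d with n ≤ c_d (R₂/R₁)^d satisfying: (1) for all i, j, the Euclidean distance between z¹_i + A^∞(R₁) and z²_j + A^∞(R₁) is at least (2 − 1/√d)(R₂ − 2R₁); (2) every continuous path γ : [0,1] → ℝ^d that crosses A^∞(R₂) also crosses z¹_i + A^∞(R₁) for some i and crosses z²_j + A^∞(R₁) for some j. -/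
open Filter

/-- The cube `Λ_R = [-R,R]^d ⊂ ℝ^d`. -/
def cubeSet (d : ℕ) (R : ℝ) : Set (EuclideanSpace ℝ (Fin d)) :=
  {x | ∀ i : Fin d, |x i| ≤ R}

/-- The sup-norm annulus `A^∞(R) = Λ_{2R} \ Λ_{R/√d}`. -/
def annulusSet (d : ℕ) (R : ℝ) : Set (EuclideanSpace ℝ (Fin d)) :=
  cubeSet d (2 * R) \ cubeSet d (R / Real.sqrt d)

/-- A set `Γ` (the image of a path) crosses the translated annulus `z + A^∞(R)` if it
intersects both `z + ∂Λ_{R/√d}` and `z + ∂Λ_{2R}`. -/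
def Crosses (d : ℕ) (Γ : Set (EuclideanSpace ℝ (Fin d)))
    (z : EuclideanSpace ℝ (Fin d)) (R : ℝ) : Prop :=
  (Γ ∩ ((fun w => z + w) '' frontier (cubeSet d (R / Real.sqrt d)))).Nonempty ∧
  (Γ ∩ ((fun w => z + w) '' frontier (cubeSet d (2 * R)))).Nonempty

/-!
Work with the sup norm `‖·‖∞`, for which `Λ_R` is the closed ball of radius `R`. For the first
family take centres on a grid of mesh `δ = R₁/√d`, clamped to `Λ_{(R₂-R₁)/√d}`: every point of
`∂Λ_{R₂/√d}` lies in the inner cube `z + Λ_δ` of some centre `z`, while `∂Λ_{2R₂}` stays at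
sup-distance at least `2R₁` from `z`. For the second family take grid centres with one coordinate
`±(2R₂ + δ)`: every point of `∂Λ_{2R₂}` lies in some `z + Λ_δ`, while `Λ_{R₂/√d}` stays at
sup-distance at least `2R₁` from `z`. A path crossing `A^∞(R₂)` joins these two regions, so by the
intermediate value theorem for `t ↦ ‖γ t - z‖∞` it crosses `z + A^∞(R₁)`. The separation is the
gap between the sup norms of the centres, `(2R₂ + δ) - (R₂ - R₁)/√d - 4R₁ = (2 - 1/√d)(R₂ - 2R₁)`,
the Euclidean norm dominating the sup norm, and each grid has `O(√d R₂/R₁)` points per axis.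
-/

open Metric

theorem one_le_sqrt_natCast {d : ℕ} (hd : 0 < d) : 1 ≤ √(d : ℝ) :=
  Real.one_le_sqrt.2 (Nat.one_le_cast.2 hd)

section SupNorm

variable {d : ℕ}

/-- `Fin d → ℝ` carries the sup norm. -/
def supNorm (x : EuclideanSpace ℝ (Fin d)) : ℝ :=
  ‖WithLp.ofLp x‖

theorem continuous_supNorm : Continuous (supNorm (d := d)) :=
  continuous_norm.comp (PiLp.continuous_ofLp 2 _)

theorem abs_apply_le_supNorm (x : EuclideanSpace ℝ (Fin d)) (i : Fin d) : |x i| ≤ supNorm x :=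
  norm_le_pi_norm (WithLp.ofLp x) i

theorem supNorm_le_iff {x : EuclideanSpace ℝ (Fin d)} {r : ℝ} (hr : 0 ≤ r) :
    supNorm x ≤ r ↔ ∀ i, |x i| ≤ r :=
  pi_norm_le_iff_of_nonneg hr

theorem supNorm_le_norm (x : EuclideanSpace ℝ (Fin d)) : supNorm x ≤ ‖x‖ :=
  (supNorm_le_iff (norm_nonneg x)).2 fun i => PiLp.norm_apply_le x i

theorem supNorm_sub_supNorm_le (x y : EuclideanSpace ℝ (Fin d)) :
    supNorm x - supNorm y ≤ supNorm (x - y) := by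
  simpa [supNorm] using norm_sub_norm_le (WithLp.ofLp x) (WithLp.ofLp y)

theorem supNorm_sub_rev (x y : EuclideanSpace ℝ (Fin d)) :
    supNorm (x - y) = supNorm (y - x) := by
  simpa [supNorm] using norm_sub_rev (WithLp.ofLp x) (WithLp.ofLp y)

theorem exists_abs_apply_eq_supNorm (hd : 0 < d) (x : EuclideanSpace ℝ (Fin d)) :
    ∃ i, |x i| = supNorm x := by
  obtain ⟨j, -, hj⟩ :=
    Finset.exists_max_image Finset.univ (fun i => |x i|) ⟨⟨0, hd⟩, Finset.mem_univ _⟩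
  exact ⟨j, le_antisymm (abs_apply_le_supNorm x j)
    ((supNorm_le_iff (abs_nonneg _)).2 fun i => hj i (Finset.mem_univ i))⟩

theorem cubeSet_eq_preimage_closedBall {R : ℝ} (hR : 0 ≤ R) :
    cubeSet d R = EuclideanSpace.equiv (Fin d) ℝ ⁻¹' closedBall 0 R := by
  ext x
  simp [cubeSet, pi_norm_le_iff_of_nonneg hR]

theorem frontier_cubeSet {R : ℝ} (hR : 0 < R) :
    frontier (cubeSet d R) = {x | supNorm x = R} := by
  rw [cubeSet_eq_preimage_closedBall hR.le, ← ContinuousLinearEquiv.coe_toHomeomorph,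
    ← Homeomorph.preimage_frontier, frontier_closedBall 0 hR.ne']
  ext x
  simp only [Set.mem_preimage, mem_sphere_iff_norm, sub_zero]
  rfl

theorem supNorm_le_of_mem_annulusSet {R : ℝ} (hR : 0 ≤ R) {w : EuclideanSpace ℝ (Fin d)}
    (hw : w ∈ annulusSet d R) : supNorm w ≤ 2 * R :=
  (supNorm_le_iff (by positivity)).2 hw.1

theorem le_norm_sub_of_mem_annulusSet {R M b : ℝ} (hR : 0 ≤ R)
    {z₁ z₂ p q : EuclideanSpace ℝ (Fin d)} (hz₁ : supNorm z₁ ≤ M) (hz₂ : b ≤ supNorm z₂)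
    (hp : p ∈ (fun w => z₁ + w) '' annulusSet d R)
    (hq : q ∈ (fun w => z₂ + w) '' annulusSet d R) :
    b - M - 4 * R ≤ ‖p - q‖ := by
  obtain ⟨w₁, hw₁, rfl⟩ := hp
  obtain ⟨w₂, hw₂, rfl⟩ := hq
  have htri : supNorm z₂ ≤
      supNorm (z₁ + w₁ - (z₂ + w₂)) + supNorm z₁ + supNorm w₁ + supNorm w₂ := by
    simp only [supNorm, WithLp.ofLp_sub, WithLp.ofLp_add]
    set X := WithLp.ofLp z₁ + WithLp.ofLp w₁ - (WithLp.ofLp z₂ + WithLp.ofLp w₂) with hX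
    calc ‖WithLp.ofLp z₂‖ = ‖-X + (WithLp.ofLp z₁ + WithLp.ofLp w₁) + -WithLp.ofLp w₂‖ := by
          rw [hX]; abel_nf
      _ ≤ ‖-X‖ + ‖WithLp.ofLp z₁ + WithLp.ofLp w₁‖ + ‖-WithLp.ofLp w₂‖ := norm_add₃_le
      _ ≤ _ := by
          rw [norm_neg, norm_neg]
          linarith [norm_add_le (WithLp.ofLp z₁) (WithLp.ofLp w₁)]
  linarith [supNorm_le_norm (z₁ + w₁ - (z₂ + w₂)), supNorm_le_of_mem_annulusSet hR hw₁,
    supNorm_le_of_mem_annulusSet hR hw₂]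

end SupNorm

section Crossing

variable {d : ℕ} {Γ : Set (EuclideanSpace ℝ (Fin d))}

theorem crosses_of_supNorm (hd : 0 < d) (hΓ : IsPreconnected Γ)
    {x y z : EuclideanSpace ℝ (Fin d)} {R : ℝ} (hR : 0 < R) (hx : x ∈ Γ) (hy : y ∈ Γ)
    (hxz : supNorm (x - z) ≤ R / √d) (hyz : 2 * R ≤ supNorm (y - z)) : Crosses d Γ z R := by
  have hlevel : ∀ r, 0 < r → supNorm (x - z) ≤ r → r ≤ supNorm (y - z) →
      (Γ ∩ (fun w => z + w) '' frontier (cubeSet d r)).Nonempty := by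
    intro r hr hxr hry
    obtain ⟨w, hw, hwr⟩ := hΓ.intermediate_value hx hy
      (continuous_supNorm.comp (continuous_id.sub continuous_const)).continuousOn ⟨hxr, hry⟩
    exact ⟨w, hw, w - z, by rw [frontier_cubeSet hr]; exact hwr, add_sub_cancel z w⟩
  have hσ := one_le_sqrt_natCast hd
  have hRσ : R / √d ≤ 2 * R := (div_le_self hR.le hσ).trans (by linarith)
  exact ⟨hlevel _ (by positivity) hxz (hRσ.trans hyz), hlevel _ (by linarith) (hxz.trans hRσ) hyz⟩

theorem Crosses.exists_supNorm_eq (hd : 0 < d) {R : ℝ} (hR : 0 < R) (h : Crosses d Γ 0 R) :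
    ∃ x ∈ Γ, ∃ y ∈ Γ, supNorm x = R / √d ∧ supNorm y = 2 * R := by
  have hσ := one_le_sqrt_natCast hd
  obtain ⟨⟨x, hx, w, hw, rfl⟩, ⟨y, hy, v, hv, rfl⟩⟩ := h
  rw [frontier_cubeSet (by positivity)] at hw hv
  exact ⟨_, hx, _, hy, by simpa using hw, by simpa using hv⟩

theorem Crosses.exists_crosses_of_inner_net (hd : 0 < d) (hΓ : IsPreconnected Γ) {R₁ R₂ : ℝ}
    (hR₁ : 0 < R₁) (hR₁₂ : R₁ ≤ R₂) (h : Crosses d Γ 0 R₂)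
    {Z : Set (EuclideanSpace ℝ (Fin d))} (hZ : ∀ z ∈ Z, supNorm z ≤ (R₂ - R₁) / √d)
    (hcover : ∀ p, supNorm p ≤ (R₂ - R₁) / √d + R₁ / √d → ∃ z ∈ Z, supNorm (p - z) ≤ R₁ / √d) :
    ∃ z ∈ Z, Crosses d Γ z R₁ := by
  obtain ⟨x, hx, y, hy, hxn, hyn⟩ := h.exists_supNorm_eq hd (hR₁.trans_le hR₁₂)
  obtain ⟨z, hz, hxz⟩ := hcover x (by rw [hxn, ← add_div, sub_add_cancel])
  refine ⟨z, hz, crosses_of_supNorm hd hΓ hR₁ hx hy hxz ?_⟩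
  linarith [supNorm_sub_supNorm_le y z, hZ z hz,
    div_le_self (sub_nonneg.2 hR₁₂) (one_le_sqrt_natCast hd)]

theorem Crosses.exists_crosses_of_outer_net (hd : 0 < d) (hΓ : IsPreconnected Γ) {R₁ R₂ : ℝ}
    (hR₁ : 0 < R₁) (hR₁₂ : 2 * R₁ ≤ R₂) (h : Crosses d Γ 0 R₂)
    {Z : Set (EuclideanSpace ℝ (Fin d))} (hZ : ∀ z ∈ Z, 2 * R₂ + R₁ / √d ≤ supNorm z)
    (hcover : ∀ p, supNorm p = 2 * R₂ → ∃ z ∈ Z, supNorm (p - z) ≤ R₁ / √d) :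
    ∃ z ∈ Z, Crosses d Γ z R₁ := by
  have hσ := one_le_sqrt_natCast hd
  obtain ⟨x, hx, y, hy, hxn, hyn⟩ := h.exists_supNorm_eq hd (by linarith)
  obtain ⟨z, hz, hyz⟩ := hcover y hyn
  refine ⟨z, hz, crosses_of_supNorm hd hΓ hR₁ hy hx hyz ?_⟩
  have : 0 ≤ R₁ / √d := by positivity
  linarith [supNorm_sub_supNorm_le z x, supNorm_sub_rev x z, hZ z hz,
    div_le_self (by linarith : 0 ≤ R₂) hσ]

end Crossing

section Nets

theorem abs_sub_clamp_le {a c u v : ℝ} (ha : 0 ≤ a) (hu : |u| ≤ a + c) (huv : |u - v| ≤ c) :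
    |u - max (-a) (min v a)| ≤ c := by
  rw [abs_le] at hu huv ⊢
  rcases le_total v a with hva | hav
  · rcases le_total (-a) v with hav' | hva'
    · rwa [min_eq_left hva, max_eq_right hav']
    · rw [min_eq_left hva, max_eq_left hva']; constructor <;> linarith
  · rw [min_eq_right hav, max_eq_right (by linarith)]; constructor <;> linarith

theorem exists_finset_abs_le_net {a δ : ℝ} (ha : 0 ≤ a) (hδ : 0 < δ) :
    ∃ F : Finset ℝ, (F.card : ℝ) ≤ 2 * a / δ + 5 ∧ (∀ v ∈ F, |v| ≤ a) ∧
      ∀ u, |u| ≤ a + δ → ∃ v ∈ F, |u - v| ≤ δ := by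
  set K : ℕ := ⌈a / δ⌉₊ + 1
  refine ⟨(Finset.Icc (-(K : ℤ)) K).image fun k : ℤ => max (-a) (min (k * δ) a), ?_, ?_, ?_⟩
  · have hK : (K : ℝ) < a / δ + 2 := by
      have := Nat.ceil_lt_add_one (div_nonneg ha hδ.le); push_cast [K]; linarith
    have hcard : (Finset.Icc (-(K : ℤ)) K).card = 2 * K + 1 := by
      rw [Int.card_Icc]; omega
    calc ((Finset.Icc (-(K : ℤ)) K).image _).card ≤ ((2 * K + 1 : ℕ) : ℝ) := by
          rw [← hcard]; exact_mod_cast Finset.card_image_le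
      _ ≤ 2 * a / δ + 5 := by push_cast; rw [mul_div_assoc]; linarith
  · simp only [Finset.mem_image]
    rintro _ ⟨k, -, rfl⟩
    exact abs_le.2 ⟨le_max_left _ _, max_le (by linarith) (min_le_right _ _)⟩
  · intro u hu
    set k := ⌊u / δ⌋
    have hku : (k : ℝ) * δ ≤ u := (le_div_iff₀ hδ).1 (Int.floor_le _)
    have huk : u < (k + 1) * δ := (div_lt_iff₀ hδ).1 (Int.lt_floor_add_one _)
    have hKδ : a + δ ≤ K * δ := by
      have := (div_le_iff₀ hδ).1 (Nat.le_ceil (a / δ))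
      push_cast [K]; rw [add_mul, one_mul]; linarith
    have hkK : k ∈ Finset.Icc (-(K : ℤ)) K := by
      have h₁ : (-(K : ℝ)) * δ < (k + 1) * δ := by linarith [abs_le.1 hu]
      have h₂ : (k : ℝ) * δ ≤ K * δ := by linarith [abs_le.1 hu]
      have h₁' : -(K : ℤ) < k + 1 := by exact_mod_cast lt_of_mul_lt_mul_right h₁ hδ.le
      have h₂' : k ≤ K := by exact_mod_cast le_of_mul_le_mul_right h₂ hδ
      exact Finset.mem_Icc.2 ⟨by omega, h₂'⟩
    refine ⟨_, Finset.mem_image_of_mem _ hkK, abs_sub_clamp_le ha hu ?_⟩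
    rw [abs_le]; constructor <;> linarith

variable {d : ℕ}

def gridPoints (d : ℕ) (F : Finset ℝ) : Finset (EuclideanSpace ℝ (Fin d)) :=
  (Fintype.piFinset fun _ => F).map (WithLp.equiv 2 (Fin d → ℝ)).symm.toEmbedding

theorem mem_gridPoints {F : Finset ℝ} {z : EuclideanSpace ℝ (Fin d)} :
    z ∈ gridPoints d F ↔ ∀ i, z i ∈ F := by
  simp [gridPoints, Finset.mem_map_equiv]

theorem card_gridPoints (F : Finset ℝ) : (gridPoints d F).card = F.card ^ d := by
  simp [gridPoints]

theorem exists_net_cubeSet (d : ℕ) {a δ : ℝ} (ha : 0 ≤ a) (hδ : 0 < δ) :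
    ∃ Z : Finset (EuclideanSpace ℝ (Fin d)), Z.Nonempty ∧ (Z.card : ℝ) ≤ (2 * a / δ + 7) ^ d ∧
      (∀ z ∈ Z, supNorm z ≤ a) ∧ ∀ p, supNorm p ≤ a + δ → ∃ z ∈ Z, supNorm (p - z) ≤ δ := by
  obtain ⟨F, hFcard, hFa, hFcover⟩ := exists_finset_abs_le_net ha hδ
  have hcover : ∀ p, supNorm p ≤ a + δ → ∃ z ∈ gridPoints d F, supNorm (p - z) ≤ δ := by
    intro p hp
    choose v hvF hvδ using fun i => hFcover (p i) ((abs_apply_le_supNorm p i).trans hp)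
    exact ⟨WithLp.toLp 2 v, mem_gridPoints.2 hvF, (supNorm_le_iff hδ.le).2 hvδ⟩
  refine ⟨gridPoints d F, ?_, ?_,
    fun z hz => (supNorm_le_iff ha).2 fun i => hFa _ (mem_gridPoints.1 hz i), hcover⟩
  · obtain ⟨z, hz, -⟩ := hcover 0 (by simp [supNorm]; positivity)
    exact ⟨z, hz⟩
  · rw [card_gridPoints, Nat.cast_pow]
    exact pow_le_pow_left₀ (Nat.cast_nonneg _) (by linarith) d

theorem exists_net_frontier_cubeSet (hd : 0 < d) {a δ : ℝ} (ha : 0 ≤ a) (hδ : 0 < δ) :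
    ∃ Z : Finset (EuclideanSpace ℝ (Fin d)), Z.Nonempty ∧ (Z.card : ℝ) ≤ (2 * a / δ + 7) ^ d ∧
      (∀ z ∈ Z, a + δ ≤ supNorm z) ∧ ∀ p, supNorm p = a → ∃ z ∈ Z, supNorm (p - z) ≤ δ := by
  obtain ⟨F, hFcard, -, hFcover⟩ := exists_finset_abs_le_net ha hδ
  set F' : Finset ℝ := insert (a + δ) (insert (-(a + δ)) F)
  set Z := (gridPoints d F').filter (a + δ ≤ supNorm ·)
  have hcover : ∀ p, supNorm p = a → ∃ z ∈ Z, supNorm (p - z) ≤ δ := by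
    intro p hp
    obtain ⟨j, hj⟩ := exists_abs_apply_eq_supNorm hd p
    have hcoord : ∀ i, ∃ v ∈ F', |p i - v| ≤ δ ∧ (i = j → a + δ ≤ |v|) := by
      intro i
      by_cases hij : i = j
      · subst hij
        have hab : 0 < a + δ := by positivity
        rcases (abs_eq ha).1 (hj.trans hp) with h | h
        · exact ⟨a + δ, by simp [F'], by simp [h, abs_of_pos hδ], fun _ => le_abs_self _⟩
        · exact ⟨-(a + δ), by simp [F'], by simp [h, abs_of_pos hδ],
            fun _ => by rw [abs_neg, abs_of_pos hab]⟩
      · obtain ⟨v, hv, hpv⟩ := hFcover (p i) (by linarith [abs_apply_le_supNorm p i])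
        exact ⟨v, by simp [F', hv], hpv, fun h => (hij h).elim⟩
    choose v hvF hvδ hvj using hcoord
    refine ⟨WithLp.toLp 2 v, Finset.mem_filter.2 ⟨mem_gridPoints.2 hvF, ?_⟩,
      (supNorm_le_iff hδ.le).2 hvδ⟩
    exact (hvj j rfl).trans (abs_apply_le_supNorm _ j)
  refine ⟨Z, ?_, ?_, fun z hz => (Finset.mem_filter.1 hz).2, hcover⟩
  · have : Nonempty (Fin d) := ⟨⟨0, hd⟩⟩
    obtain ⟨z, hz, -⟩ := hcover (WithLp.toLp 2 fun _ => a) (by simp [supNorm, abs_of_nonneg ha])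
    exact ⟨z, hz⟩
  · have hF' : (F'.card : ℝ) ≤ F.card + 2 := by
      have := Finset.card_insert_le (-(a + δ)) F
      exact_mod_cast (Finset.card_insert_le _ _).trans (by omega)
    calc (Z.card : ℝ) ≤ (gridPoints d F').card := by exact_mod_cast Finset.card_filter_le _ _
      _ ≤ _ := by
          rw [card_gridPoints, Nat.cast_pow]
          exact pow_le_pow_left₀ (Nat.cast_nonneg _) (by linarith) d

theorem grid_count_le (hd : 0 < d) {R₁ R₂ a : ℝ} (hR₁ : 0 < R₁) (hR₁₂ : 2 * R₁ ≤ R₂)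
    (ha₀ : 0 ≤ a) (ha : a ≤ 2 * R₂) :
    (2 * a / (R₁ / √d) + 7) ^ d ≤ (8 * d) ^ d * (R₂ / R₁) ^ d := by
  have hσ : √d ≤ d := Real.sqrt_le_self_iff.2 (Or.inr (Nat.one_le_cast.2 hd))
  have hx : 2 ≤ R₂ / R₁ := (le_div_iff₀ hR₁).2 (by linarith)
  have hd' : (1 : ℝ) ≤ d := Nat.one_le_cast.2 hd
  rw [← mul_pow]
  refine pow_le_pow_left₀ (by positivity) ?_ d
  calc 2 * a / (R₁ / √d) + 7 ≤ 2 * (2 * R₂) * (d / R₁) + 7 := by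
        rw [div_div_eq_mul_div, mul_div_assoc]; gcongr; linarith
    _ = 4 * d * (R₂ / R₁) + 7 := by ring
    _ ≤ 8 * d * (R₂ / R₁) := by nlinarith

end Nets

theorem Finset.Nonempty.exists_fin_range_eq {α : Type*} {s : Finset α} (hs : s.Nonempty)
    {n : ℕ} (hn : s.card ≤ n) : ∃ f : Fin n → α, Set.range f = s := by
  have : Nonempty (Fin s.card) := ⟨⟨0, hs.card_pos⟩⟩
  refine ⟨((↑) ∘ s.equivFin.symm) ∘ Function.invFun (Fin.castLE hn), ?_⟩
  rw [(Function.invFun_surjective (Fin.castLE_injective hn)).range_comp,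
    s.equivFin.symm.surjective.range_comp, Subtype.range_coe]

/-- there is a dimensional constant `c_d ≥ 1` such that for all `R₁ ≥ 1` and
`R₂ ≥ 2R₁` there exist two collections of at most `c_d (R₂/R₁)^d` translated copies of
`A^∞(R₁)`, mutually `(2-1/√d)(R₂-2R₁)`-separated, such that every continuous path crossing
`A^∞(R₂)` crosses one annulus of each collection. -/
theorem statement14 (d : ℕ) (hd : 1 ≤ d) :
    ∃ c : ℝ, 1 ≤ c ∧ ∀ R₁ : ℝ, 1 ≤ R₁ → ∀ R₂ : ℝ, 2 * R₁ ≤ R₂ →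
      ∃ (n : ℕ) (z₁ z₂ : Fin n → EuclideanSpace ℝ (Fin d)),
        (n : ℝ) ≤ c * (R₂ / R₁) ^ d ∧
        (∀ i j : Fin n, ∀ p ∈ (fun w => z₁ i + w) '' annulusSet d R₁,
          ∀ q ∈ (fun w => z₂ j + w) '' annulusSet d R₁,
            (2 - 1 / Real.sqrt d) * (R₂ - 2 * R₁) ≤ ‖p - q‖) ∧
        (∀ γ : ℝ → EuclideanSpace ℝ (Fin d), ContinuousOn γ (Set.Icc 0 1) →
          Crosses d (γ '' Set.Icc 0 1) 0 R₂ →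
            (∃ i, Crosses d (γ '' Set.Icc 0 1) (z₁ i) R₁) ∧
            (∃ j, Crosses d (γ '' Set.Icc 0 1) (z₂ j) R₁)) := by
  refine ⟨(8 * d) ^ d, one_le_pow₀ (by norm_cast; omega), fun R₁ hR₁ R₂ hR₂ => ?_⟩
  have hR₁0 : 0 < R₁ := by linarith
  have hR₂0 : 0 < R₂ := by linarith
  have hσ := one_le_sqrt_natCast hd
  have hM : (R₂ - R₁) / √d ≤ R₂ - R₁ := div_le_self (by linarith) hσ
  have hM₀ : 0 ≤ (R₂ - R₁) / √d := div_nonneg (by linarith) (by positivity)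
  have hδ : 0 < R₁ / √d := by positivity
  obtain ⟨Z₁, hZ₁, hZ₁card, hZ₁norm, hZ₁cover⟩ := exists_net_cubeSet d hM₀ hδ
  obtain ⟨Z₂, hZ₂, hZ₂card, hZ₂norm, hZ₂cover⟩ := 
    exists_net_frontier_cubeSet hd (a := 2 * R₂) (by positivity) hδ
  obtain ⟨z₁, hz₁⟩ := hZ₁.exists_fin_range_eq (le_max_left Z₁.card Z₂.card)
  obtain ⟨z₂, hz₂⟩ := hZ₂.exists_fin_range_eq (le_max_right Z₁.card Z₂.card)
  refine ⟨_, z₁, z₂, ?_, fun i j p hp q hq => ?_, fun γ hγ hcross => ?_⟩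
  · rw [Nat.cast_max]
    exact max_le (hZ₁card.trans (grid_count_le hd hR₁0 hR₂ hM₀ (by linarith)))
      (hZ₂card.trans (grid_count_le hd hR₁0 hR₂ (by positivity) le_rfl))
  · convert le_norm_sub_of_mem_annulusSet hR₁0.le (hZ₁norm _ (hz₁.subset ⟨i, rfl⟩))
      (hZ₂norm _ (hz₂.subset ⟨j, rfl⟩)) hp hq using 1
    field_simp
    ring
  · have hΓ := isPreconnected_Icc.image γ hγ
    obtain ⟨_, hi, hcross₁⟩ :=
      hcross.exists_crosses_of_inner_net hd hΓ hR₁0 (by linarith) hZ₁norm hZ₁cover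
    obtain ⟨_, hj, hcross₂⟩ := hcross.exists_crosses_of_outer_net hd hΓ hR₁0 hR₂ hZ₂norm hZ₂cover
    obtain ⟨i, rfl⟩ := hz₁.superset hi
    obtain ⟨j, rfl⟩ := hz₂.superset hj
    exact ⟨⟨i, hcross₁⟩, ⟨j, hcross₂⟩⟩
end

section
/- Let P and Q be probability measures on a measurable space (Ω, ℱ) with Q absolutely continuous with respect to P, and suppose the relative entropy D(Q‖P) = ∫ log(dQ/dP) dQ is finite. Then for every measurable set A with Q(A) > 0, P(A) ≥ Q(A) · exp(−D(Q‖P)/Q(A) − 1). -/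
open MeasureTheory Real

/-! Write `f = dQ/dP`, `g = dP/dQ = 1/f` (`Q`-a.e.), `a = Q(A)`, `p = P(A)`. For every `t > 0`,
`log x ≤ x - 1` at `x = g/t` gives `-log f ≤ log t + g/t - 1` `Q`-a.e., and `∫_B g dQ ≤ P(B)`.
Integrating over `A` with `t = p/a` and over `Aᶜ` with `t = 1` yields
`-D(Q‖P) ≤ a log(p/a) + a - p ≤ a log(p/a) + a`, which rearranges to the claim. -/

namespace MeasureTheory

variable {α : Type*} [MeasurableSpace α] {μ ν : Measure α}

lemma ae_neg_llr_le [SigmaFinite μ] [SigmaFinite ν] (hμν : μ ≪ ν) {t : ℝ} (ht : 0 < t) :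
    ∀ᵐ x ∂μ, -llr μ ν x ≤ log t + (ν.rnDeriv μ x).toReal / t - 1 := by
  filter_upwards [neg_llr hμν, Measure.rnDeriv_pos' hμν, Measure.rnDeriv_lt_top ν μ]
    with x hneg hpos hfin
  have hg : 0 < (ν.rnDeriv μ x).toReal := ENNReal.toReal_pos hpos.ne' hfin.ne
  have hlog := log_le_sub_one_of_pos (div_pos hg ht)
  rw [log_div hg.ne' ht.ne'] at hlog
  rw [Pi.neg_apply] at hneg
  rw [hneg, llr]
  linarith

lemma setIntegral_neg_llr_le [IsFiniteMeasure μ] [IsFiniteMeasure ν] (hμν : μ ≪ ν)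
    (h_int : Integrable (llr μ ν) μ) (s : Set α) {t : ℝ} (ht : 0 < t) :
    ∫ x in s, -llr μ ν x ∂μ ≤ μ.real s * (log t - 1) + ν.real s / t := by
  have hg : Integrable (fun x ↦ (ν.rnDeriv μ x).toReal / t) μ :=
    Measure.integrable_toReal_rnDeriv.div_const t
  calc ∫ x in s, -llr μ ν x ∂μ
      ≤ ∫ x in s, ((ν.rnDeriv μ x).toReal / t + (log t - 1)) ∂μ := by
        refine integral_mono_ae h_int.neg.integrableOn
          (hg.add (integrable_const _)).integrableOn (ae_restrict_of_ae ?_)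
        filter_upwards [ae_neg_llr_le hμν ht] with x hx
        linarith
    _ = (∫ x in s, (ν.rnDeriv μ x).toReal ∂μ) / t + μ.real s * (log t - 1) := by
        rw [integral_add hg.integrableOn (integrable_const _).integrableOn, integral_div,
          setIntegral_const, smul_eq_mul]
    _ ≤ ν.real s / t + μ.real s * (log t - 1) := by
        gcongr
        exact Measure.setIntegral_toReal_rnDeriv_le (measure_ne_top ν s)
    _ = μ.real s * (log t - 1) + ν.real s / t := add_comm _ _

lemma Measure.AbsolutelyContinuous.measureReal_pos [IsFiniteMeasure ν] (hμν : μ ≪ ν) {s : Set α}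
    (hμs : 0 < μ.real s) : 0 < ν.real s :=
  ENNReal.toReal_pos (mt (@hμν s) (ENNReal.toReal_pos_iff.mp hμs).1.ne') (measure_ne_top ν s)

lemma neg_integral_llr_le [IsProbabilityMeasure μ] [IsProbabilityMeasure ν] (hμν : μ ≪ ν)
    (h_int : Integrable (llr μ ν) μ) {s : Set α} (hs : MeasurableSet s) (hμs : 0 < μ.real s) :
    -∫ x, llr μ ν x ∂μ ≤ μ.real s * log (ν.real s / μ.real s) + μ.real s := by
  have hνs := hμν.measureReal_pos hμs
  have h_in := setIntegral_neg_llr_le hμν h_int s (div_pos hνs hμs)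
  have h_out := setIntegral_neg_llr_le hμν h_int sᶜ one_pos
  rw [div_div_cancel₀ hνs.ne'] at h_in
  rw [log_one, probReal_compl_eq_one_sub hs, probReal_compl_eq_one_sub hs] at h_out
  have h_split := integral_add_compl hs h_int.neg
  simp only [Pi.neg_apply] at h_split
  rw [← integral_neg, ← h_split]
  linarith

end MeasureTheory

lemma mul_exp_le_of_neg_le_mul_log_add {a p D : ℝ} (ha : 0 < a) (hp : 0 < p)
    (h : -D ≤ a * log (p / a) + a) : a * exp (-D / a - 1) ≤ p := by
  have hexp : -D / a - 1 ≤ log (p / a) := by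
    rw [sub_le_iff_le_add, div_le_iff₀ ha]
    linarith
  calc a * exp (-D / a - 1) ≤ a * (p / a) := by
        gcongr
        exact (le_log_iff_exp_le (div_pos hp ha)).mp hexp
    _ = p := mul_div_cancel₀ p ha.ne'

/-- Entropic bound: if `P, Q` are probability measures with `Q ≪ P` and
finite relative entropy `D(Q‖P) = ∫ log(dQ/dP) dQ`, then for every measurable set `A` with
`Q(A) > 0`, `P(A) ≥ Q(A) exp(-D(Q‖P)/Q(A) - 1)`. -/
theorem statement16 {Ω : Type*} [MeasurableSpace Ω] (P Q : Measure Ω)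
    [IsProbabilityMeasure P] [IsProbabilityMeasure Q]
    (hac : Q ≪ P)
    (hD : Integrable (fun ω => Real.log (Q.rnDeriv P ω).toReal) Q)
    (A : Set Ω) (hA : MeasurableSet A) (hQA : 0 < Q A) :
    (Q A).toReal *
        Real.exp (-(∫ ω, Real.log (Q.rnDeriv P ω).toReal ∂Q) / (Q A).toReal - 1) ≤
      (P A).toReal := by
  have hQA_real : 0 < Q.real A := ENNReal.toReal_pos hQA.ne' (measure_ne_top Q A)
  exact mul_exp_le_of_neg_le_mul_log_add hQA_real (hac.measureReal_pos hQA_real)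
    (neg_integral_llr_le hac hD hA hQA_real)
end
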